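/- arXiv:1904.10334 — 4 statements merged into one kernel-verified Lean document; each statement's English description precedes it below -/
import Mathlib

section
/- For all integers i, j and any polynomial g(s,t) in two variables over ℂ, and parameters λ, α ∈ ℂ*, β ∈ ℂ, define operators E_i(g)(s,t) = λ^i·α·g(s−i, t−2) and F_j(g)(s,t) = −(λ^j/α)·(t/2 − β)(t/2 + β + 1)·g(s−j, t+2). Then (E_i ∘ F_j − F_j ∘ E_i)(g)(s,t) = λ^{i+j}·t·g(s−i−j, t), i.e., the commutator [e_i, f_j] acts as multiplication by λ^{i+j} t composed with the shift s ↦ s−i−j. -/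
open MvPolynomial

abbrev R2 : Type := MvPolynomial (Fin 2) ℂ

/-- Substitution `g(s,t) ↦ g(s - u, t + v)`. -/
noncomputable def sh (u v : ℂ) : R2 →ₐ[ℂ] R2 := aeval ![X 0 - C u, X 1 + C v]

/-- Action of `e_i` in `Ω(λ,α,β,γ)`. -/
noncomputable def omE (lam a : ℂ) (i : ℤ) (g : R2) : R2 :=
  C (lam ^ i * a) * sh (i : ℂ) (-2) g

/-- Action of `f_i` in `Ω(λ,α,β,γ)`. -/
noncomputable def omF (lam a b : ℂ) (i : ℤ) (g : R2) : R2 :=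
  C (-(lam ^ i / a)) * (C 2⁻¹ * X 1 - C b) * (C 2⁻¹ * X 1 + C b + 1) * sh (i : ℂ) 2 g

/-- Action of `h_i` in `Ω(λ,α,β,γ)`. -/
noncomputable def opH (lam : ℂ) (i : ℤ) (g : R2) : R2 :=
  C (lam ^ i) * X 1 * sh (i : ℂ) 0 g

/-! Both `e_i f_j` and `f_j e_i` shift `g` to `g(s - i - j, t)` with the scalar
`-λ^{i+j}`, and differ only in the quadratic factor `q(t) = (t/2 - β)(t/2 + β + 1)`, which `e_i f_j`
evaluates at `t - 2`. Since `q(t) - q(t - 2) = t`, the commutator is multiplication by `λ^{i+j} t`. -/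

lemma sh_C (u v c : ℂ) : sh u v (C c) = C c :=
  (sh u v).commutes c

lemma sh_X_one (u v : ℂ) : sh u v (X 1) = X 1 + C v := by
  simp [sh]

lemma sh_comp_sh (u v u' v' : ℂ) : (sh u v).comp (sh u' v') = sh (u + u') (v + v') := by
  refine MvPolynomial.algHom_ext fun k => ?_
  fin_cases k <;> simp [sh] <;> ring

lemma sh_sh (u v u' v' : ℂ) (g : R2) : sh u v (sh u' v' g) = sh (u + u') (v + v') g :=
  AlgHom.congr_fun (sh_comp_sh u v u' v') g

noncomputable def fFactor (b : ℂ) : R2 := (C 2⁻¹ * X 1 - C b) * (C 2⁻¹ * X 1 + C b + 1)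

lemma omF_eq (lam a b : ℂ) (j : ℤ) (g : R2) :
    omF lam a b j g = C (-(lam ^ j / a)) * fFactor b * sh (j : ℂ) 2 g := by
  rw [omF, fFactor, mul_assoc (C _)]

lemma fFactor_sub_sh (b u : ℂ) : fFactor b - sh u (-2) (fFactor b) = X 1 := by
  have shift : (C (2⁻¹ : ℂ) : R2) * C (-2) = -1 := by
    rw [← C_mul]; norm_num
  have half : (C (2⁻¹ : ℂ) : R2) * 2 = 1 := by
    rw [← map_ofNat C 2, ← C_mul]; norm_num
  simp only [fFactor, map_mul, map_add, map_sub, map_one, sh_C, sh_X_one, mul_add, shift]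
  linear_combination X 1 * half

lemma omE_omF (lam a b : ℂ) (i j : ℤ) (g : R2) :
    omE lam a i (omF lam a b j g)
      = C (lam ^ i * a * -(lam ^ j / a)) * sh (i : ℂ) (-2) (fFactor b)
          * sh ((i + j : ℤ) : ℂ) 0 g := by
  rw [omE, omF_eq]
  simp only [map_mul, sh_C, sh_sh]
  norm_num
  ring

lemma omF_omE (lam a b : ℂ) (i j : ℤ) (g : R2) :
    omF lam a b j (omE lam a i g)
      = C (lam ^ i * a * -(lam ^ j / a)) * fFactor b * sh ((i + j : ℤ) : ℂ) 0 g := by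
  rw [omE, omF_eq]
  simp only [map_mul, sh_C, sh_sh]
  norm_num
  rw [add_comm (j : ℂ)]
  ring

theorem stmt0 (lam a : ℂ) (hlam : lam ≠ 0) (ha : a ≠ 0) (b : ℂ) (i j : ℤ)
    (g : R2) :
    omE lam a i (omF lam a b j g) - omF lam a b j (omE lam a i g)
      = opH lam (i + j) g := by
  have scalar : lam ^ i * a * -(lam ^ j / a) = -lam ^ (i + j) := by
    field_simp
    rw [zpow_add₀ hlam]
  rw [omE_omF, omF_omE, scalar, opH, ← fFactor_sub_sh b i, C_neg]
  ring
end

section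
/- Suppose 2β ∉ ℤ_{≥0} (i.e., 2β is not a nonnegative integer). Then for any nonzero g(t) ∈ ℂ[t], there exists k ∈ ℕ such that the polynomials α^k·(∏_{n=0}^{k−1}(t/2 + β − n))·g(t−2k) and (−1/α)^k·(∏_{n=0}^{k−1}(t/2 − β + n))·g(t+2k) are coprime in ℂ[t]. -/
open Polynomial

theorem stmt7 (a : ℂ) (ha : a ≠ 0) (b : ℂ)
    (hb : ∀ m : ℕ, 2 * b ≠ (m : ℂ))
    (g : Polynomial ℂ) (hg : g ≠ 0) :
    ∃ k : ℕ, IsCoprime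
      (C (a ^ k) * (∏ n ∈ Finset.range k, (C 2⁻¹ * X + C (b - (n : ℂ))))
        * g.comp (X - C (2 * (k : ℂ))))
      (C ((-(1 / a)) ^ k) * (∏ n ∈ Finset.range k, (C 2⁻¹ * X - C b + C (n : ℂ)))
        * g.comp (X + C (2 * (k : ℂ)))) := by
  classical
  set R := g.roots.toFinset with hR
  set T : Finset ℂ := ((R.image fun r => b + 2⁻¹ * r) ∪ (R.image fun r => b - 2⁻¹ * r) ∪
    ((R ×ˢ R).image fun p => (p.2 - p.1) / 4)) with hT
  have hfin : {j : ℕ | (j : ℂ) ∈ (T : Set ℂ)}.Finite :=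
    T.finite_toSet.preimage (fun x _ y _ h => Nat.cast_injective h)
  obtain ⟨K, hK⟩ := hfin.bddAbove
  refine ⟨K + 1, ?_⟩
  set k := K + 1 with hk
  have hmemT : ∀ j : ℕ, (j : ℂ) ∈ T → j ≤ K := fun j hj => hK (Finset.mem_coe.mpr hj)
  have hroot : ∀ z : ℂ, g.eval z = 0 → z ∈ R := fun z hz => by
    simp [hR, Multiset.mem_toFinset, mem_roots, hg, IsRoot, hz]
  rw [Polynomial.isCoprime_iff_aeval_ne_zero_of_isAlgClosed (k := ℂ) ℂ]
  intro z
  by_contra hcon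
  push_neg at hcon
  obtain ⟨h1, h2⟩ := hcon
  have ha2 : (-(1/a) : ℂ) ≠ 0 := by simp [ha]
  simp only [map_mul, map_prod, aeval_C, aeval_X, map_add, map_sub, aeval_comp, map_ofNat,
    Algebra.algebraMap_self_apply, coe_aeval_eq_eval, mul_eq_zero] at h1 h2
  have h1' : (∃ n ∈ Finset.range k, 2⁻¹ * z + (b - (n : ℂ)) = 0)
      ∨ g.eval (z - 2 * (k : ℂ)) = 0 := by
    rcases h1 with (h | h) | h
    · exact absurd h (pow_ne_zero _ ha)
    · exact Or.inl (Finset.prod_eq_zero_iff.mp h)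
    · exact Or.inr h
  have h2' : (∃ m ∈ Finset.range k, 2⁻¹ * z - b + (m : ℂ) = 0)
      ∨ g.eval (z + 2 * (k : ℂ)) = 0 := by
    rcases h2 with (h | h) | h
    · exact absurd h (pow_ne_zero _ ha2)
    · exact Or.inl (Finset.prod_eq_zero_iff.mp h)
    · exact Or.inr h
  rcases h1' with ⟨n, hn, hne⟩ | hr1 <;> rcases h2' with ⟨m, hm, hme⟩ | hr2
  · exact hb (n + m) (by push_cast; linear_combination hne - hme)
  · have hmem : ((n + k : ℕ) : ℂ) ∈ T := by
      rw [hT]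
      simp only [Finset.mem_union, Finset.mem_image]
      exact Or.inl (Or.inl ⟨z + 2 * (k : ℂ), hroot _ hr2, by push_cast; linear_combination hne⟩)
    have := hmemT _ hmem
    omega
  · have hmem : ((m + k : ℕ) : ℂ) ∈ T := by
      rw [hT]
      simp only [Finset.mem_union, Finset.mem_image]
      exact Or.inl (Or.inr ⟨z - 2 * (k : ℂ), hroot _ hr1, by push_cast; linear_combination -hme⟩)
    have := hmemT _ hmem
    omega
  · have hmem : ((k : ℕ) : ℂ) ∈ T := by
      rw [hT]
      simp only [Finset.mem_union, Finset.mem_image, Finset.mem_product]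
      exact Or.inr ⟨(z - 2 * (k : ℂ), z + 2 * (k : ℂ)), ⟨hroot _ hr1, hroot _ hr2⟩, by ring⟩
    have := hmemT _ hmem
    omega
end

section
/- The modules Ω(λ, α, β, γ) and Δ(λ, α, β, γ) over the affine-Virasoro algebra of type A₁ are simple for all λ, α ∈ ℂ \ {0} and β, γ ∈ ℂ. -/
/-!
Since `h_0` and `d_0` act by multiplication by `t` and `s`, an invariant subspace is an ideal
of `ℂ[s,t]`. Up to a nonzero scalar, `e_i` on `Ω` (resp. `f_i` on `Δ`) is the substitution
`g(s,t) ↦ g(s - i, t ∓ 2)`, so the common zero set of the ideal is stable under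
`(s,t) ↦ (s - i, t ∓ 2)`. If the ideal is proper it has a common zero by the Nullstellensatz,
which then spreads to a box `{s₀ - n} × {t₀ ∓ 2(k + 1)}` with infinite sides, on which a
polynomial can only vanish if it is zero.
-/

open MvPolynomial

/-- Action of `d_i`. -/
noncomputable def opD (lam c : ℂ) (i : ℤ) (g : R2) : R2 :=
  C (lam ^ i) * (X 0 + C ((i : ℂ) * c)) * sh (i : ℂ) 0 g
/-- Action of `e_i` in `Δ(λ,α,β,γ)`. -/
noncomputable def deE (lam a b : ℂ) (i : ℤ) (g : R2) : R2 :=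
  C (-(lam ^ i / a)) * (C 2⁻¹ * X 1 + C b) * (C 2⁻¹ * X 1 - C b - 1) * sh (i : ℂ) (-2) g

/-- Action of `f_i` in `Δ(λ,α,β,γ)`. -/
noncomputable def deF (lam a : ℂ) (i : ℤ) (g : R2) : R2 :=
  C (lam ^ i * a) * sh (i : ℂ) 2 g

namespace MvPolynomial

theorem exists_ideal_restrictScalars_eq {R σ : Type*} [CommSemiring R]
    (W : Submodule R (MvPolynomial σ R)) (hX : ∀ i, ∀ g ∈ W, X i * g ∈ W) :
    ∃ I : Ideal (MvPolynomial σ R), I.restrictScalars R = W := by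
  have hmul : ∀ p : MvPolynomial σ R, ∀ g ∈ W, p * g ∈ W := by
    intro p
    induction p using MvPolynomial.induction_on with
    | C r => intro g hg; rw [← smul_eq_C_mul]; exact W.smul_mem r hg
    | add p q hp hq => intro g hg; rw [add_mul]; exact W.add_mem (hp g hg) (hq g hg)
    | mul_X p i hp => intro g hg; rw [mul_assoc]; exact hp _ (hX i g hg)
  exact ⟨{ W.toAddSubmonoid with smul_mem' := fun p g hg => hmul p g hg }, rfl⟩

theorem exists_forall_eval_eq_zero_of_ne_top {σ K : Type*} [Finite σ] [Field K] [IsAlgClosed K]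
    {I : Ideal (MvPolynomial σ K)} (hI : I ≠ ⊤) : ∃ x : σ → K, ∀ p ∈ I, eval x p = 0 := by
  obtain ⟨M, hM, hIM⟩ := I.exists_le_maximal hI
  obtain ⟨x, rfl⟩ := eq_vanishingIdeal_singleton_of_isMaximal K hM
  exact ⟨x, fun p hp => (mem_vanishingIdeal_singleton_iff x p).mp (hIM hp)⟩

end MvPolynomial

theorem eval_sh (u v : ℂ) (x : Fin 2 → ℂ) (g : R2) :
    eval x (sh u v g) = eval ![x 0 - u, x 1 + v] g := by
  change (aeval x).comp (sh u v) g = _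
  rw [sh, comp_aeval]
  change aeval _ g = aeval _ g
  congr 2
  funext i
  fin_cases i <;> simp

theorem sh_zero_zero (g : R2) : sh 0 0 g = g := by
  have : (![X 0 - C 0, X 1 + C 0] : Fin 2 → R2) = X := by
    funext i; fin_cases i <;> simp
  rw [sh, this, aeval_X_left_apply]

theorem opH_zero (lam : ℂ) (g : R2) : opH lam 0 g = X 1 * g := by
  simp [opH, sh_zero_zero]

theorem opD_zero (lam c : ℂ) (g : R2) : opD lam c 0 g = X 0 * g := by
  simp [opD, sh_zero_zero]

theorem omE_eq_smul (lam a : ℂ) (i : ℤ) (g : R2) :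
    omE lam a i g = (lam ^ i * a) • sh (i : ℂ) (-2) g := by
  rw [omE, smul_eq_C_mul]

theorem deF_eq_smul (lam a : ℂ) (i : ℤ) (g : R2) :
    deF lam a i g = (lam ^ i * a) • sh (i : ℂ) 2 g := by
  rw [deF, smul_eq_C_mul]

theorem eval_eq_zero_of_forall_sh_mem {v : ℂ} {I : Ideal R2}
    (hsh : ∀ i : ℤ, ∀ g ∈ I, sh (i : ℂ) v g ∈ I) {x : Fin 2 → ℂ}
    (hx : ∀ g ∈ I, eval x g = 0) (k n : ℕ) :
    ∀ g ∈ I, eval ![x 0 - n, x 1 + (k + 1) * v] g = 0 := by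
  have hstep : ∀ y : Fin 2 → ℂ, (∀ g ∈ I, eval y g = 0) →
      ∀ n : ℕ, ∀ g ∈ I, eval ![y 0 - n, y 1 + v] g = 0 := by
    intro y hy n g hg
    simpa [eval_sh] using hy _ (hsh n g hg)
  induction k generalizing n with
  | zero => simpa using hstep x hx n
  | succ k ih =>
    intro g hg
    convert hstep ![x 0 - (0 : ℕ), x 1 + (k + 1) * v] (ih 0) n g hg using 3
    funext i
    fin_cases i
    · simp
    · simp only [Fin.mk_one, Matrix.cons_val_one]
      push_cast
      ring

theorem Ideal.eq_bot_of_forall_sh_mem {v : ℂ} (hv : v ≠ 0) {I : Ideal R2}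
    (hsh : ∀ i : ℤ, ∀ g ∈ I, sh (i : ℂ) v g ∈ I) {x : Fin 2 → ℂ}
    (hx : ∀ g ∈ I, eval x g = 0) : I = ⊥ := by
  have hside : ∀ w : ℂ, w ≠ 0 → ∀ z : ℂ, (Set.range fun n : ℕ => z + n * w).Infinite :=
    fun w hw z => Set.infinite_range_of_injective fun m n h => by simpa [hw] using h
  refine eq_bot_iff.mpr fun g hg => (Ideal.mem_bot).mpr <| funext_set ![_, _]
    (Fin.forall_fin_two.mpr ⟨hside (-1) (by norm_num) (x 0), hside v hv (x 1 + v)⟩)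
    fun y hy => ?_
  obtain ⟨n, hn⟩ := hy 0 trivial
  obtain ⟨k, hk⟩ := hy 1 trivial
  have hy : y = ![x 0 - n, x 1 + (k + 1) * v] := by
    funext i; fin_cases i
    · simp [← hn]; ring
    · simp [← hk]; ring
  rw [hy, map_zero]
  exact eval_eq_zero_of_forall_sh_mem hsh hx k n g hg

theorem eq_bot_or_eq_top_of_invariant {v : ℂ} (hv : v ≠ 0) (lam c : ℂ) (W : Submodule ℂ R2)
    (hH : ∀ i : ℤ, ∀ g ∈ W, opH lam i g ∈ W) (hD : ∀ i : ℤ, ∀ g ∈ W, opD lam c i g ∈ W)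
    (hsh : ∀ i : ℤ, ∀ g ∈ W, sh (i : ℂ) v g ∈ W) : W = ⊥ ∨ W = ⊤ := by
  obtain ⟨I, rfl⟩ := exists_ideal_restrictScalars_eq W fun i g hg => by
    fin_cases i
    · simpa [opD_zero] using hD 0 g hg
    · simpa [opH_zero] using hH 0 g hg
  simp only [Submodule.restrictScalars_eq_bot_iff, Submodule.restrictScalars_eq_top_iff]
  refine or_iff_not_imp_right.mpr fun hI => ?_
  obtain ⟨x, hx⟩ := exists_forall_eval_eq_zero_of_ne_top hI
  exact Ideal.eq_bot_of_forall_sh_mem hv hsh hx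

/-- Ω(λ,α,β,γ) and Δ(λ,α,β,γ) are simple for all λ,α ∈ ℂ*, β,γ ∈ ℂ: every ℂ-subspace
invariant under all operators e_i, f_i, h_i, d_i (C acts as 0) is ⊥ or ⊤. -/
theorem stmt10 (lam a : ℂ) (hlam : lam ≠ 0) (ha : a ≠ 0) (b c : ℂ) :
    (∀ W : Submodule ℂ R2,
      (∀ i : ℤ, ∀ g ∈ W, omE lam a i g ∈ W) →
      (∀ i : ℤ, ∀ g ∈ W, omF lam a b i g ∈ W) →
      (∀ i : ℤ, ∀ g ∈ W, opH lam i g ∈ W) →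
      (∀ i : ℤ, ∀ g ∈ W, opD lam c i g ∈ W) →
      W = ⊥ ∨ W = ⊤) ∧
    (∀ W : Submodule ℂ R2,
      (∀ i : ℤ, ∀ g ∈ W, deE lam a b i g ∈ W) →
      (∀ i : ℤ, ∀ g ∈ W, deF lam a i g ∈ W) →
      (∀ i : ℤ, ∀ g ∈ W, opH lam i g ∈ W) →
      (∀ i : ℤ, ∀ g ∈ W, opD lam c i g ∈ W) →
      W = ⊥ ∨ W = ⊤) := by
  have hne : ∀ i : ℤ, lam ^ i * a ≠ 0 := fun i => mul_ne_zero (zpow_ne_zero _ hlam) ha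
  constructor
  · intro W hE _ hH hD
    refine eq_bot_or_eq_top_of_invariant (v := -2) (by norm_num) lam c W hH hD fun i g hg => ?_
    exact (W.smul_mem_iff (hne i)).mp (omE_eq_smul lam a i g ▸ hE i g hg)
  · intro W _ hF hH hD
    refine eq_bot_or_eq_top_of_invariant (v := 2) (by norm_num) lam c W hH hD fun i g hg => ?_
    exact (W.smul_mem_iff (hne i)).mp (deF_eq_smul lam a i g ▸ hF i g hg)
end

section
/- Let E, F ∈ ℂ[x, y] be polynomials satisfying E(x, y)·F(x, y−2) − E(x, y+2)·F(x, y) = y. Then E·F ≠ 0, and writing E = Σ_{i=0}^m a_i(x)y^i and F = Σ_{i=0}^n b_i(x)y^i with a_m, b_n ≠ 0, one has m + n = 2 and a_m(x)·b_n(x) = −1/4. -/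
/-!
Put `G(y) = E(y) F(y - 2)`; the hypothesis says exactly `G(y) - G(y + 2) = y`. Taylor expansion
shows that for `d = deg G ≥ 1` the coefficient of `y^(d-1)` in `G(y) - G(y + r)` is
`-d r lc(G)`, which is nonzero over a domain of characteristic zero. Comparing with `y` forces
`d - 1 = 1` and `-4 lc(G) = 1`, while `deg G = deg E + deg F` and `lc(G) = lc(E) lc(F)` because a
shift preserves degree and leading coefficient.
-/

open Polynomial

theorem coeff_taylor_natDegree_sub_one {R : Type*} [CommRing R] (f : R[X]) (r : R) :
    (taylor r f).coeff (f.natDegree - 1) =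
      f.coeff (f.natDegree - 1) + f.natDegree * r * f.leadingCoeff := by
  rw [leadingCoeff]
  rcases hd : f.natDegree with _ | d
  · rw [eq_C_of_natDegree_eq_zero hd, taylor_C]
    simp
  have hasseDeriv_eq : hasseDeriv d f = C ((d + 1 : R) * f.coeff (d + 1)) * X + C (f.coeff d) := by
    rw [eq_X_add_C_of_natDegree_le_one ((natDegree_hasseDeriv_le f d).trans (by omega))]
    simp [hasseDeriv_coeff, add_comm 1 d]
  rw [Nat.add_sub_cancel, taylor_coeff, hasseDeriv_eq]
  simp only [eval_add, eval_mul, eval_C, eval_X]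
  push_cast
  ring

theorem natDegree_eq_two_of_sub_taylor_eq_X {R : Type*} [CommRing R] [IsDomain R] [CharZero R]
    {G : R[X]} {r : R} (h : G - taylor r G = X) :
    G.natDegree = 2 ∧ 2 * r * G.leadingCoeff = -1 := by
  have hcoeff : (X : R[X]).coeff (G.natDegree - 1) = -(G.natDegree * r * G.leadingCoeff) := by
    rw [← h, coeff_sub, coeff_taylor_natDegree_sub_one]
    ring
  have hd : G.natDegree ≠ 0 := by
    intro hd
    rw [eq_C_of_natDegree_eq_zero hd, taylor_C, sub_self] at h
    exact X_ne_zero h.symm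
  have hr : r ≠ 0 := by
    rintro rfl
    rw [taylor_zero, sub_self] at h
    exact X_ne_zero h.symm
  have hlc : G.leadingCoeff ≠ 0 :=
    leadingCoeff_ne_zero.mpr (ne_zero_of_natDegree_gt (Nat.pos_of_ne_zero hd))
  have hd1 : G.natDegree - 1 = 1 := by
    by_contra hne
    rw [coeff_X_of_ne_one hne, eq_comm, neg_eq_zero] at hcoeff
    exact mul_ne_zero (mul_ne_zero (Nat.cast_ne_zero.mpr hd) hr) hlc hcoeff
  have hd2 : G.natDegree = 2 := by omega
  rw [hd1, coeff_X_one, hd2, Nat.cast_ofNat] at hcoeff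
  exact ⟨hd2, by linear_combination hcoeff⟩

theorem comp_X_sub_two_eq_taylor {R : Type*} [CommRing R] (f : R[X]) :
    f.comp (X - 2) = taylor (-2) f := by
  rw [taylor_apply, C_neg, C_ofNat, sub_eq_add_neg]

/-- ℂ[x,y] is modelled as (ℂ[x])[y]; composition is substitution in y. -/
theorem stmt14 (E F : Polynomial (Polynomial ℂ))
    (h : E * F.comp (X - 2) - E.comp (X + 2) * F = X) :
    E * F ≠ 0 ∧ E.natDegree + F.natDegree = 2 ∧
    E.leadingCoeff * F.leadingCoeff = Polynomial.C (-(1 / 4) : ℂ) := by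
  have hG : E * taylor (-2) F - taylor 2 (E * taylor (-2) F) = X := by
    rwa [taylor_mul, taylor_taylor, add_neg_cancel, taylor_zero, ← comp_X_sub_two_eq_taylor,
      taylor_apply, C_ofNat]
  obtain ⟨hdeg, hlc⟩ := natDegree_eq_two_of_sub_taylor_eq_X hG
  have hG0 : E * taylor (-2) F ≠ 0 := ne_zero_of_natDegree_gt (n := 0) (by omega)
  obtain ⟨hE, hF⟩ := mul_ne_zero_iff.mp hG0
  refine ⟨mul_ne_zero hE (mt (taylor_eq_zero _ F).mpr hF), ?_, ?_⟩
  · rwa [natDegree_mul hE hF, natDegree_taylor] at hdeg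
  · rw [leadingCoeff_mul, leadingCoeff_taylor] at hlc
    have h4 : C (-(1 / 4) : ℂ) * (2 * 2) = -1 := by
      simp only [← C_ofNat, ← C_mul, ← C_1, ← C_neg]
      norm_num
    linear_combination (-C (-(1 / 4) : ℂ)) * hlc + E.leadingCoeff * F.leadingCoeff * h4
end
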